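/- arXiv:1501.01525 — 6 statements merged into one kernel-verified Lean document; each statement's English description precedes it below -/
import Mathlib

section
/- Let D be a symmetric positive definite p×p real matrix, H a symmetric positive definite m×m real matrix, and A a p×m real matrix with ‖D⁻¹AH⁻¹‖ < 1. Then the block matrix 𝒟² = [[D², A], [Aᵀ, H²]] is symmetric positive definite, and, denoting by 𝒟 its unique symmetric positive definite square root, for every vector υ = (θ, η) ∈ ℝ^p × ℝ^m one has max(‖D⁻¹θ‖, ‖H⁻¹η‖) ≤ ‖𝒟⁻¹υ‖. -/
open Matrix

/-- Euclidean norm of a vector in `ℝ^n`. -/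
noncomputable def euclNorm {n : Type*} [Fintype n] (v : n → ℝ) : ℝ :=
  Real.sqrt (∑ i, v i ^ 2)

/-- Spectral (L2 operator) norm of a real matrix. -/
noncomputable def specNorm {m n : Type*} [Fintype m] [Fintype n] [DecidableEq n]
    (M : Matrix m n ℝ) : ℝ :=
  ‖LinearMap.toContinuousLinearMap (Matrix.toEuclideanLin M)‖

/-! Write `M = D⁻¹ A H⁻¹`. The block matrix is the congruence
`diag(D, H) * [[1, M], [Mᵀ, 1]] * diag(D, H)`, and the middle factor is positive definite since
`|u ⬝ M v| ≤ ‖M‖ ‖u‖ ‖v‖` with `‖M‖ < 1`; its square root is `CFC.sqrt`. For the norm bound,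
expanding `0 ≤ ‖S⁻¹ v - S w‖²` gives `2 w ⬝ v - w ⬝ S² w ≤ ‖S⁻¹ v‖²` for every `w`, and the test
vector `w = ((D²)⁻¹ θ, 0)` turns the left-hand side into `‖D⁻¹ θ‖²` (similarly for `η`). -/

section

variable {ι κ : Type*} [Fintype ι] [Fintype κ]

lemma euclNorm_eq_norm_toLp (v : ι → ℝ) : euclNorm v = ‖WithLp.toLp 2 v‖ := by
  simp [EuclideanSpace.norm_eq, euclNorm, sq_abs]

lemma euclNorm_eq_sqrt_dotProduct (v : ι → ℝ) : euclNorm v = √(v ⬝ᵥ v) := by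
  simp [euclNorm, dotProduct, sq]

lemma euclNorm_sq (v : ι → ℝ) : euclNorm v ^ 2 = v ⬝ᵥ v := by
  rw [euclNorm_eq_sqrt_dotProduct, Real.sq_sqrt (by simpa using dotProduct_self_star_nonneg v)]

lemma euclNorm_pos {v : ι → ℝ} (hv : v ≠ 0) : 0 < euclNorm v := by
  rw [euclNorm_eq_norm_toLp, norm_pos_iff]
  exact fun h ↦ hv (by simpa using congrArg WithLp.ofLp h)

lemma abs_dotProduct_mulVec_le_specNorm [DecidableEq κ] (M : Matrix ι κ ℝ) (x : ι → ℝ)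
    (y : κ → ℝ) : |x ⬝ᵥ (M *ᵥ y)| ≤ specNorm M * euclNorm x * euclNorm y := by
  set L := LinearMap.toContinuousLinearMap (toEuclideanLin M)
  have hL : x ⬝ᵥ (M *ᵥ y) = inner ℝ (WithLp.toLp 2 x) (L (WithLp.toLp 2 y)) := by
    simp [L, PiLp.inner_apply, dotProduct, mul_comm]
  rw [hL, euclNorm_eq_norm_toLp, euclNorm_eq_norm_toLp, specNorm, mul_right_comm]
  exact (abs_real_inner_le_norm _ _).trans
    (by simpa [mul_comm] using mul_le_mul_of_nonneg_left (L.le_opNorm _) (norm_nonneg _))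

namespace Matrix

lemma PosDef.isSymm {n : Type*} {S : Matrix n n ℝ} (hS : S.PosDef) : S.IsSymm :=
  isHermitian_iff_isSymm.mp hS.1

lemma IsSymm.dotProduct_mulVec_comm {S : Matrix ι ι ℝ} (hS : S.IsSymm) (a b : ι → ℝ) :
    a ⬝ᵥ (S *ᵥ b) = (S *ᵥ a) ⬝ᵥ b := by
  rw [dotProduct_mulVec, ← mulVec_transpose, hS.eq, dotProduct_comm]

lemma IsSymm.dotProduct_inv_mulVec_self [DecidableEq ι] {D : Matrix ι ι ℝ} (hD : D.IsSymm)
    (θ : ι → ℝ) : (D⁻¹ *ᵥ θ) ⬝ᵥ (D⁻¹ *ᵥ θ) = ((D * D)⁻¹ *ᵥ θ) ⬝ᵥ θ := by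
  rw [← hD.inv.dotProduct_mulVec_comm, mulVec_mulVec, mul_inv_rev, dotProduct_comm]

lemma sumElim_dotProduct_fromBlocks_mulVec (P : Matrix ι ι ℝ) (B : Matrix ι κ ℝ)
    (C : Matrix κ ι ℝ) (Q : Matrix κ κ ℝ) (u : ι → ℝ) (v : κ → ℝ) :
    Sum.elim u v ⬝ᵥ (fromBlocks P B C Q *ᵥ Sum.elim u v)
      = u ⬝ᵥ (P *ᵥ u) + u ⬝ᵥ (B *ᵥ v) + v ⬝ᵥ (C *ᵥ u) + v ⬝ᵥ (Q *ᵥ v) := by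
  simp only [fromBlocks_mulVec, Sum.elim_comp_inl, Sum.elim_comp_inr,
    sumElim_dotProduct_sumElim, dotProduct_add]
  ring

section BlockMatrix

variable [DecidableEq ι] [DecidableEq κ]

lemma posDef_fromBlocks_one_of_specNorm_lt_one (M : Matrix ι κ ℝ) (hM : specNorm M < 1) :
    (fromBlocks 1 M Mᵀ 1).PosDef := by
  refine .of_dotProduct_mulVec_pos (.fromBlocks isHermitian_one rfl isHermitian_one)
    fun x hx ↦ ?_
  obtain ⟨u, v, rfl⟩ : ∃ u v, x = Sum.elim u v := ⟨_, _, (Sum.elim_comp_inl_inr x).symm⟩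
  have hcross := abs_dotProduct_mulVec_le_specNorm M u v
  have hamgm : 2 * (euclNorm u * euclNorm v) ≤ euclNorm u ^ 2 + euclNorm v ^ 2 := by
    nlinarith [sq_nonneg (euclNorm u - euclNorm v)]
  have hpos : 0 < euclNorm u ^ 2 + euclNorm v ^ 2 := by
    rw [euclNorm_sq, euclNorm_sq, ← sumElim_dotProduct_sumElim, ← euclNorm_sq]
    exact pow_pos (euclNorm_pos hx) 2
  have hnorm : 0 ≤ specNorm M := norm_nonneg _
  simp only [star_trivial, sumElim_dotProduct_fromBlocks_mulVec, one_mulVec]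
  rw [mulVec_transpose, dotProduct_comm v, ← dotProduct_mulVec, ← euclNorm_sq, ← euclNorm_sq]
  nlinarith [abs_le.mp hcross, mul_le_mul_of_nonneg_left hamgm hnorm]

lemma fromBlocks_mul_self_eq_conj_fromBlocks_one {D : Matrix ι ι ℝ} {H : Matrix κ κ ℝ}
    (A : Matrix ι κ ℝ) (hD : D.IsSymm) (hH : H.IsSymm) (hDu : IsUnit D.det)
    (hHu : IsUnit H.det) :
    fromBlocks (D * D) A Aᵀ (H * H)
      = fromBlocks D 0 0 H * fromBlocks 1 (D⁻¹ * A * H⁻¹) (D⁻¹ * A * H⁻¹)ᵀ 1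
          * fromBlocks D 0 0 H := by
  have hA : D * (D⁻¹ * A * H⁻¹) * H = A := by
    simp only [← Matrix.mul_assoc, mul_nonsing_inv _ hDu, Matrix.one_mul]
    rw [Matrix.mul_assoc, nonsing_inv_mul _ hHu, Matrix.mul_one]
  have hAt : H * (D⁻¹ * A * H⁻¹)ᵀ * D = Aᵀ := by
    simpa only [transpose_mul, hD.eq, hH.eq, Matrix.mul_assoc] using congrArg transpose hA
  simp only [fromBlocks_multiply, Matrix.mul_one, Matrix.mul_zero, Matrix.zero_mul, add_zero,
    zero_add, hA, hAt]

lemma posDef_fromBlocks_mul_self {D : Matrix ι ι ℝ} {H : Matrix κ κ ℝ} {A : Matrix ι κ ℝ}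
    (hD : D.PosDef) (hH : H.PosDef) (hA : specNorm (D⁻¹ * A * H⁻¹) < 1) :
    (fromBlocks (D * D) A Aᵀ (H * H)).PosDef := by
  have hDu := hD.det_pos.ne'.isUnit
  have hHu := hH.det_pos.ne'.isUnit
  have hU : IsUnit (fromBlocks D 0 0 H) := by
    rw [isUnit_iff_isUnit_det, det_fromBlocks_zero₂₁]
    exact hDu.mul hHu
  have hUsymm : star (fromBlocks D 0 0 H) = fromBlocks D 0 0 H := by
    rw [star_eq_conjTranspose, fromBlocks_conjTranspose, hD.1.eq, hH.1.eq]
    simp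
  rw [fromBlocks_mul_self_eq_conj_fromBlocks_one A hD.isSymm hH.isSymm hDu hHu]
  nth_rewrite 1 [← hUsymm]
  rw [hU.posDef_star_left_conjugate_iff]
  exact posDef_fromBlocks_one_of_specNorm_lt_one _ hA

end BlockMatrix

open scoped MatrixOrder ComplexOrder in
lemma PosDef.existsUnique_posDef_mul_self_eq {𝕜 : Type*} [RCLike 𝕜] {n : Type*} [Fintype n]
    [DecidableEq n] {B : Matrix n n 𝕜} (hB : B.PosDef) :
    ∃! S : Matrix n n 𝕜, S.PosDef ∧ S * S = B :=
  ⟨CFC.sqrt B, ⟨hB.isStrictlyPositive.sqrt.posDef, CFC.sqrt_mul_sqrt_self B hB.posSemidef.nonneg⟩,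
    fun _ ⟨hS, hSS⟩ ↦ (CFC.sqrt_unique hSS hS.posSemidef.nonneg).symm⟩

lemma two_mul_dotProduct_sub_le_dotProduct_inv_mulVec [DecidableEq ι] {S : Matrix ι ι ℝ}
    (hS : S.IsSymm) (hSu : IsUnit S.det) (w v : ι → ℝ) :
    2 * (w ⬝ᵥ v) - w ⬝ᵥ ((S * S) *ᵥ w) ≤ (S⁻¹ *ᵥ v) ⬝ᵥ (S⁻¹ *ᵥ v) := by
  set x := S⁻¹ *ᵥ v
  have hSx : S *ᵥ x = v := by rw [mulVec_mulVec, mul_nonsing_inv _ hSu, one_mulVec]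
  have hsq : 0 ≤ (x - S *ᵥ w) ⬝ᵥ (x - S *ᵥ w) := by
    simpa using dotProduct_self_star_nonneg (x - S *ᵥ w)
  have hexpand : (x - S *ᵥ w) ⬝ᵥ (x - S *ᵥ w)
      = x ⬝ᵥ x - 2 * (w ⬝ᵥ v) + w ⬝ᵥ ((S * S) *ᵥ w) := by
    rw [← mulVec_mulVec, hS.dotProduct_mulVec_comm w, sub_dotProduct, dotProduct_sub,
      dotProduct_sub, hS.dotProduct_mulVec_comm x, hSx, dotProduct_comm (S *ᵥ w) x,
      hS.dotProduct_mulVec_comm x, hSx, dotProduct_comm v w]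
    ring
  linarith

section Variational

variable [DecidableEq ι] [DecidableEq κ] {S : Matrix (ι ⊕ κ) (ι ⊕ κ) ℝ}

lemma euclNorm_inv_mulVec_le_of_mul_self_eq_fromBlocks_left {D : Matrix ι ι ℝ}
    {B : Matrix ι κ ℝ} {C : Matrix κ ι ℝ} {Q : Matrix κ κ ℝ}
    (hS : S.IsSymm) (hSu : IsUnit S.det) (hD : D.IsSymm) (hDu : IsUnit D.det)
    (hSS : S * S = fromBlocks (D * D) B C Q) (θ : ι → ℝ) (η : κ → ℝ) :
    euclNorm (D⁻¹ *ᵥ θ) ≤ euclNorm (S⁻¹ *ᵥ Sum.elim θ η) := by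
  set u := (D * D)⁻¹ *ᵥ θ
  have hu : (D * D) *ᵥ u = θ := by
    rw [mulVec_mulVec, mul_nonsing_inv _ (by simpa using hDu.mul hDu), one_mulVec]
  have key := two_mul_dotProduct_sub_le_dotProduct_inv_mulVec hS hSu (Sum.elim u 0)
    (Sum.elim θ η)
  rw [hSS, sumElim_dotProduct_fromBlocks_mulVec, sumElim_dotProduct_sumElim, hu] at key
  simp only [mulVec_zero, dotProduct_zero, zero_dotProduct, add_zero] at key
  rw [euclNorm_eq_sqrt_dotProduct, euclNorm_eq_sqrt_dotProduct, hD.dotProduct_inv_mulVec_self]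
  exact Real.sqrt_le_sqrt (by linarith)

lemma euclNorm_inv_mulVec_le_of_mul_self_eq_fromBlocks_right {P : Matrix ι ι ℝ}
    {B : Matrix ι κ ℝ} {C : Matrix κ ι ℝ} {H : Matrix κ κ ℝ}
    (hS : S.IsSymm) (hSu : IsUnit S.det) (hH : H.IsSymm) (hHu : IsUnit H.det)
    (hSS : S * S = fromBlocks P B C (H * H)) (θ : ι → ℝ) (η : κ → ℝ) :
    euclNorm (H⁻¹ *ᵥ η) ≤ euclNorm (S⁻¹ *ᵥ Sum.elim θ η) := by
  set u := (H * H)⁻¹ *ᵥ η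
  have hu : (H * H) *ᵥ u = η := by
    rw [mulVec_mulVec, mul_nonsing_inv _ (by simpa using hHu.mul hHu), one_mulVec]
  have key := two_mul_dotProduct_sub_le_dotProduct_inv_mulVec hS hSu (Sum.elim 0 u)
    (Sum.elim θ η)
  rw [hSS, sumElim_dotProduct_fromBlocks_mulVec, sumElim_dotProduct_sumElim, hu] at key
  simp only [mulVec_zero, dotProduct_zero, zero_dotProduct, zero_add] at key
  rw [euclNorm_eq_sqrt_dotProduct, euclNorm_eq_sqrt_dotProduct, hH.dotProduct_inv_mulVec_self]
  exact Real.sqrt_le_sqrt (by linarith)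

end Variational

end Matrix

end

/-- If `D`, `H` are symmetric positive definite and `‖D⁻¹AH⁻¹‖ < 1`, then the block
matrix `𝒟² = [[D², A], [Aᵀ, H²]]` is (symmetric) positive definite and, for its unique
symmetric positive definite square root `𝒟`, every `υ = (θ, η)` satisfies
`max (‖D⁻¹θ‖, ‖H⁻¹η‖) ≤ ‖𝒟⁻¹υ‖`. -/
theorem stmt0 {p m : ℕ} (D : Matrix (Fin p) (Fin p) ℝ) (H : Matrix (Fin m) (Fin m) ℝ)
    (A : Matrix (Fin p) (Fin m) ℝ)
    (hD : D.PosDef) (hH : H.PosDef)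
    (hA : specNorm (D⁻¹ * A * H⁻¹) < 1) :
    (Matrix.fromBlocks (D * D) A Aᵀ (H * H)).PosDef ∧
    (∃! S : Matrix (Fin p ⊕ Fin m) (Fin p ⊕ Fin m) ℝ,
        S.PosDef ∧ S * S = Matrix.fromBlocks (D * D) A Aᵀ (H * H)) ∧
    (∀ S : Matrix (Fin p ⊕ Fin m) (Fin p ⊕ Fin m) ℝ,
      S.PosDef → S * S = Matrix.fromBlocks (D * D) A Aᵀ (H * H) →
      ∀ θ : Fin p → ℝ, ∀ η : Fin m → ℝ,
        max (euclNorm (D⁻¹.mulVec θ)) (euclNorm (H⁻¹.mulVec η))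
          ≤ euclNorm (S⁻¹.mulVec (Sum.elim θ η))) := by
  have hB := posDef_fromBlocks_mul_self hD hH hA
  refine ⟨hB, hB.existsUnique_posDef_mul_self_eq, fun S hS hSS θ η ↦ max_le ?_ ?_⟩
  · exact euclNorm_inv_mulVec_le_of_mul_self_eq_fromBlocks_left hS.isSymm
      hS.det_pos.ne'.isUnit hD.isSymm hD.det_pos.ne'.isUnit hSS θ η
  · exact euclNorm_inv_mulVec_le_of_mul_self_eq_fromBlocks_right hS.isSymm
      hS.det_pos.ne'.isUnit hH.isSymm hH.det_pos.ne'.isUnit hSS θ η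
end

section
/- Let 0 ≤ ν < 1, z ≥ 0, R ≥ 0 and let (τ_k)_{k≥1} be nonnegative reals. Let (a_k)_{k≥0} and (b_k)_{k≥1} be nonnegative reals with a₀ ≤ R and, for every k ≥ 1, b_k ≤ z + √ν · a_{k−1} + τ_k and a_k ≤ z + √ν · b_k + τ_k. Then for every k ≥ 1: a_k ≤ (1+√ν) Σ_{j=0}^{k−1} ν^j (z + τ_{k−j}) + ν^k R, and consequently a_k ≤ (1−√ν)⁻¹ z + (1+√ν) Σ_{j=0}^{k−1} ν^j τ_{k−j} + ν^k R. -/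
/-- Deterministic recursion underlying the alternating maximization analysis:
if `b_k ≤ z + √ν a_{k−1} + τ_k` and `a_k ≤ z + √ν b_k + τ_k` with `a₀ ≤ R`, then
`a_k ≤ (1+√ν) Σ_{j<k} ν^j (z + τ_{k−j}) + ν^k R`, and consequently
`a_k ≤ (1−√ν)⁻¹ z + (1+√ν) Σ_{j<k} ν^j τ_{k−j} + ν^k R`. -/
theorem stmt2 (ν z R : ℝ) (hν0 : 0 ≤ ν) (hν1 : ν < 1) (hz : 0 ≤ z) (hR : 0 ≤ R)
    (τ a b : ℕ → ℝ)
    (hτ : ∀ k, 1 ≤ k → 0 ≤ τ k) (ha : ∀ k, 0 ≤ a k) (hb : ∀ k, 1 ≤ k → 0 ≤ b k)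
    (ha0 : a 0 ≤ R)
    (hbrec : ∀ k, 1 ≤ k → b k ≤ z + Real.sqrt ν * a (k - 1) + τ k)
    (harec : ∀ k, 1 ≤ k → a k ≤ z + Real.sqrt ν * b k + τ k) :
    ∀ k, 1 ≤ k →
      a k ≤ (1 + Real.sqrt ν) * (∑ j ∈ Finset.range k, ν ^ j * (z + τ (k - j)))
              + ν ^ k * R ∧
      a k ≤ (1 - Real.sqrt ν)⁻¹ * z
              + (1 + Real.sqrt ν) * (∑ j ∈ Finset.range k, ν ^ j * τ (k - j))
              + ν ^ k * R := by
  set s := Real.sqrt ν with hs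
  have hs0 : 0 ≤ s := Real.sqrt_nonneg ν
  have hss : s * s = ν := Real.mul_self_sqrt hν0
  have hs1 : s < 1 := by
    have := Real.sqrt_lt_sqrt hν0 hν1
    simpa using this
  -- one-step recursion for a
  have step : ∀ k, 1 ≤ k → a k ≤ (1 + s) * (z + τ k) + ν * a (k - 1) := by
    intro k hk
    have h1 := harec k hk
    have h2 := hbrec k hk
    have h3 : s * b k ≤ s * (z + s * a (k - 1) + τ k) :=
      mul_le_mul_of_nonneg_left h2 hs0
    have h4 : z + s * (z + s * a (k - 1) + τ k) + τ k
        = (1 + s) * (z + τ k) + ν * a (k - 1) := by rw [← hss]; ring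
    linarith
  -- main bound by induction
  have main : ∀ k, 1 ≤ k →
      a k ≤ (1 + s) * (∑ j ∈ Finset.range k, ν ^ j * (z + τ (k - j))) + ν ^ k * R := by
    intro k hk
    induction k with
    | zero => omega
    | succ n ih =>
      rcases Nat.eq_zero_or_pos n with hn | hn
      · subst hn
        simp [Finset.sum_range_one]
        have := step 1 le_rfl
        have h0 : ν * a 0 ≤ ν * R := mul_le_mul_of_nonneg_left ha0 hν0
        linarith
      · have ihn := ih hn
        have hstep := step (n + 1) (by omega)
        simp only [Nat.add_sub_cancel] at hstep
        have hsum : (∑ j ∈ Finset.range (n + 1), ν ^ j * (z + τ (n + 1 - j)))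
            = (z + τ (n + 1)) + ν * (∑ j ∈ Finset.range n, ν ^ j * (z + τ (n - j))) := by
          rw [Finset.sum_range_succ' (fun j => ν ^ j * (z + τ (n + 1 - j))) n]
          rw [Finset.mul_sum]
          simp only [pow_zero, one_mul, Nat.sub_zero]
          rw [add_comm]
          congr 1
          apply Finset.sum_congr rfl
          intro j hj
          have : n + 1 - (j + 1) = n - j := by omega
          rw [this]; ring
        rw [hsum]
        have hmul : ν * a n ≤ ν * ((1 + s) * (∑ j ∈ Finset.range n, ν ^ j * (z + τ (n - j)))
            + ν ^ n * R) := mul_le_mul_of_nonneg_left ihn hν0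
        calc a (n + 1) ≤ (1 + s) * (z + τ (n + 1)) + ν * a n := hstep
          _ ≤ (1 + s) * (z + τ (n + 1)) + ν * ((1 + s) * (∑ j ∈ Finset.range n, ν ^ j * (z + τ (n - j))) + ν ^ n * R) := by linarith
          _ = (1 + s) * ((z + τ (n + 1)) + ν * (∑ j ∈ Finset.range n, ν ^ j * (z + τ (n - j)))) + ν ^ (n + 1) * R := by ring
  intro k hk
  refine ⟨main k hk, ?_⟩
  have hmain := main k hk
  have hsplit : (∑ j ∈ Finset.range k, ν ^ j * (z + τ (k - j)))
      = (∑ j ∈ Finset.range k, ν ^ j) * z + ∑ j ∈ Finset.range k, ν ^ j * τ (k - j) := by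
    simp only [mul_add, Finset.sum_add_distrib, Finset.sum_mul]
  have hgeom : (∑ j ∈ Finset.range k, ν ^ j) ≤ (1 - ν)⁻¹ := by
    rw [geom_sum_eq (ne_of_lt hν1)]
    have h1n : (0:ℝ) < 1 - ν := by linarith
    have heq : (ν ^ k - 1) / (ν - 1) = (1 - ν ^ k) / (1 - ν) := by
      rw [← neg_div_neg_eq, neg_sub, neg_sub]
    rw [heq, inv_eq_one_div]
    gcongr
    nlinarith [pow_nonneg hν0 k]
  have hfactor : (1 + s) * (1 - ν)⁻¹ = (1 - s)⁻¹ := by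
    have h1 : (1 - ν) = (1 - s) * (1 + s) := by nlinarith
    have h1ps : (0:ℝ) < 1 + s := by linarith
    rw [h1, mul_inv, mul_comm (1 - s)⁻¹, ← mul_assoc,
      mul_inv_cancel₀ (ne_of_gt h1ps), one_mul]
  have hzb : (1 + s) * ((∑ j ∈ Finset.range k, ν ^ j) * z) ≤ (1 - s)⁻¹ * z := by
    rw [← hfactor]
    have := mul_le_mul_of_nonneg_right hgeom hz
    nlinarith
  rw [hsplit] at hmain
  have : (1 + s) * ((∑ j ∈ Finset.range k, ν ^ j) * z + ∑ j ∈ Finset.range k, ν ^ j * τ (k - j))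
      = (1 + s) * ((∑ j ∈ Finset.range k, ν ^ j) * z) + (1 + s) * (∑ j ∈ Finset.range k, ν ^ j * τ (k - j)) := by ring
  rw [this] at hmain
  linarith
end

section
/- Let 0 ≤ ν < 1 and R ≥ 0. Define for integers k ≥ 1: B_{1,k} := Σ_{r=0}^{k−1} ν^r R², and recursively for s ≥ 2: B_{s,k} := Σ_{r=0}^{k−1} ν^r (B_{s−1,k−r})². Then for every s ≥ 1 and every k ≥ 1, B_{s,k} ≤ (1/(1−ν))^{2^s − 1} · R^{2^s}. -/
/-- The nested geometric sums `B_{s,k}`: `B_{1,k} = Σ_{r<k} ν^r R²` and, for `s ≥ 2`,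
`B_{s,k} = Σ_{r<k} ν^r (B_{s−1,k−r})²`.  (The value at `s = 0` is irrelevant.) -/
noncomputable def Bseq (ν R : ℝ) : ℕ → ℕ → ℝ
  | 0, _ => 0
  | 1, k => ∑ r ∈ Finset.range k, ν ^ r * R ^ 2
  | (s + 2), k => ∑ r ∈ Finset.range k, ν ^ r * (Bseq ν R (s + 1) (k - r)) ^ 2

lemma Bseq_nonneg (ν R : ℝ) (hν0 : 0 ≤ ν) (s k : ℕ) : 0 ≤ Bseq ν R s k := by
  match s with
  | 0 => simp [Bseq]
  | 1 => exact Finset.sum_nonneg fun r _ => by positivity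
  | s + 2 => exact Finset.sum_nonneg fun r _ => by positivity

lemma geom_sum_le_aux (ν : ℝ) (hν0 : 0 ≤ ν) (hν1 : ν < 1) (k : ℕ) :
    ∑ r ∈ Finset.range k, ν ^ r ≤ 1 / (1 - ν) := by
  have h1 : 0 < 1 - ν := by linarith
  rw [geom_sum_eq hν1.ne]
  have heq : (ν ^ k - 1) / (ν - 1) = (1 - ν ^ k) / (1 - ν) := by
    rw [div_eq_div_iff (by linarith) (by linarith)]; ring
  rw [heq]
  have hk : 0 ≤ ν ^ k := by positivity
  gcongr
  linarith

/-- For `0 ≤ ν < 1` and `R ≥ 0`, one has `B_{s,k} ≤ (1/(1−ν))^{2^s − 1} R^{2^s}`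
for all `s ≥ 1` and `k ≥ 1`. -/
theorem stmt3 (ν R : ℝ) (hν0 : 0 ≤ ν) (hν1 : ν < 1) (hR : 0 ≤ R) :
    ∀ s, 1 ≤ s → ∀ k, 1 ≤ k →
      Bseq ν R s k ≤ (1 / (1 - ν)) ^ (2 ^ s - 1) * R ^ (2 ^ s) := by
  have h1 : 0 < 1 - ν := by linarith
  have hd : 0 ≤ 1 / (1 - ν) := by positivity
  intro s
  induction s with
  | zero => omega
  | succ n ih =>
    intro _ k hk
    match n with
    | 0 =>
      show Bseq ν R 1 k ≤ _
      simp only [Bseq, ← Finset.sum_mul]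
      calc (∑ r ∈ Finset.range k, ν ^ r) * R ^ 2
          ≤ (1 / (1 - ν)) * R ^ 2 := by
            apply mul_le_mul_of_nonneg_right (geom_sum_le_aux ν hν0 hν1 k) (by positivity)
        _ = (1 / (1 - ν)) ^ (2 ^ 1 - 1) * R ^ (2 ^ 1) := by norm_num
    | m + 1 =>
      have ihm := ih (by omega)
      set C := (1 / (1 - ν)) ^ (2 ^ (m + 1) - 1) * R ^ (2 ^ (m + 1)) with hC
      have hCnn : 0 ≤ C := by positivity
      show Bseq ν R (m + 2) k ≤ _
      calc Bseq ν R (m + 2) k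
          ≤ ∑ r ∈ Finset.range k, ν ^ r * C ^ 2 := by
            apply Finset.sum_le_sum
            intro r hr
            have hr' : 1 ≤ k - r := by
              simp only [Finset.mem_range] at hr; omega
            have hb := ihm (k - r) hr'
            have hbn := Bseq_nonneg ν R hν0 (m + 1) (k - r)
            apply mul_le_mul_of_nonneg_left _ (by positivity)
            exact pow_le_pow_left₀ hbn hb 2
        _ = (∑ r ∈ Finset.range k, ν ^ r) * C ^ 2 := by rw [Finset.sum_mul]
        _ ≤ (1 / (1 - ν)) * C ^ 2 :=
            mul_le_mul_of_nonneg_right (geom_sum_le_aux ν hν0 hν1 k) (by positivity)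
        _ = (1 / (1 - ν)) ^ (2 ^ (m + 2) - 1) * R ^ (2 ^ (m + 2)) := by
            have e1 : 2 ^ (m + 2) - 1 = (2 ^ (m + 1) - 1) * 2 + 1 := by
              have : 1 ≤ 2 ^ (m + 1) := Nat.one_le_two_pow
              have : 2 ^ (m + 2) = 2 ^ (m + 1) * 2 := by ring
              omega
            have e2 : 2 ^ (m + 2) = 2 ^ (m + 1) * 2 := by ring
            rw [hC, mul_pow, ← pow_mul, ← pow_mul, e1, e2, pow_add, pow_one]
            ring
end

section
/- Let 0 < ν < 1, ε ≥ 0, z ≥ 0, R ≥ 0 and set C := 2√2(1+√ν)/(1−√ν). Let (r_k^{(l)})_{k≥1, l≥0} be a doubly indexed family of nonnegative reals and define A_{1,k}^{(l)} := Σ_{r=0}^{k−1} ν^r (r_{k−r}^{(l−1)})² for l ≥ 1, and recursively A_{s,k}^{(l)} := Σ_{r=0}^{k−1} ν^r (A_{s−1,k−r}^{(l)})² for s ≥ 2. Assume that for all k ≥ 1 and l ≥ 1: r_k^{(l)} ≤ C[(z + εz²) + ν^k R + ε A_{1,k}^{(l)}]. Then for every s ≥ 1, every k ≥ 1 and every l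 ≥ 2: A_{s,k}^{(l)} ≤ 7^{2^s−1} C^{2^s} [ (1/(1−ν))^{2^s−1} (z+εz²)^{2^s} + ν^k (ν/(1−ν))^{2^s−1} R^{2^s} ] + 7^{2^s−1} (Cε)^{2^s} A_{s+1,k}^{(l−1)}. -/
/-- The nested sums `A_{s,k}^{(l)}`: `A_{1,k}^{(l)} = Σ_{j<k} ν^j (r_{k−j}^{(l−1)})²`
and, for `s ≥ 2`, `A_{s,k}^{(l)} = Σ_{j<k} ν^j (A_{s−1,k−j}^{(l)})²`.
(The value at `s = 0` is irrelevant.)  Here `rr k l` denotes `r_k^{(l)}`. -/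
noncomputable def Aseq (ν : ℝ) (rr : ℕ → ℕ → ℝ) : ℕ → ℕ → ℕ → ℝ
  | 0, _, _ => 0
  | 1, k, l => ∑ j ∈ Finset.range k, ν ^ j * (rr (k - j) (l - 1)) ^ 2
  | (s + 2), k, l => ∑ j ∈ Finset.range k, ν ^ j * (Aseq ν rr (s + 1) (k - j) l) ^ 2


lemma geomA {ν : ℝ} (hν0 : 0 ≤ ν) (hν1 : ν < 1) (k : ℕ) :
    ∑ j ∈ Finset.range k, ν ^ j ≤ 1 / (1 - ν) := by
  have h1ν : 0 < 1 - ν := by linarith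
  rw [geom_sum_eq (by linarith : ν ≠ 1),
    show ν ^ k - 1 = -(1 - ν ^ k) by ring, show ν - 1 = -(1 - ν) by ring, neg_div_neg_eq,
    div_le_div_iff₀ h1ν h1ν]
  nlinarith [pow_nonneg hν0 k]

lemma geomB {ν : ℝ} (hν0 : 0 ≤ ν) (hν1 : ν < 1) (k : ℕ) :
    ∑ j ∈ Finset.range k, ν ^ j * (ν ^ (k - j)) ^ 2 ≤ ν ^ k * (ν / (1 - ν)) := by
  have h1ν : 0 < 1 - ν := by linarith
  have e : ∀ j ∈ Finset.range k, ν ^ j * (ν ^ (k - j)) ^ 2 = ν ^ (k + 1) * ν ^ (k - 1 - j) := by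
    intro j hj
    have hj' : j < k := Finset.mem_range.mp hj
    rw [← pow_mul, ← pow_add, ← pow_add]
    congr 1
    omega
  rw [Finset.sum_congr rfl e, ← Finset.mul_sum,
    Finset.sum_range_reflect (fun j => ν ^ j) k]
  calc ν ^ (k + 1) * ∑ j ∈ Finset.range k, ν ^ j
      ≤ ν ^ (k + 1) * (1 / (1 - ν)) :=
        mul_le_mul_of_nonneg_left (geomA hν0 hν1 k) (pow_nonneg hν0 _)
    _ = ν ^ k * (ν / (1 - ν)) := by rw [pow_succ]; ring

lemma sq3 (a b c : ℝ) : (a + b + c) ^ 2 ≤ 3 * (a ^ 2 + b ^ 2 + c ^ 2) := by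
  nlinarith [sq_nonneg (a - b), sq_nonneg (a - c), sq_nonneg (b - c)]

lemma three_le_seven (m : ℕ) (X : ℝ) (hX : 0 ≤ X) : 3 * 7 ^ (2 * m) * X ≤ 7 ^ (2 * m + 1) * X := by
  have h7 : (0:ℝ) < 7 ^ (2 * m) := by positivity
  have e : (7:ℝ) ^ (2 * m + 1) = 7 * 7 ^ (2 * m) := by ring
  nlinarith

lemma key (ν P Q E : ℝ) (hν0 : 0 < ν) (hν1 : ν < 1) (f g : ℕ → ℝ)
    (hf0 : ∀ i, 0 ≤ f i) (k : ℕ) (hk : 1 ≤ k)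
    (hfb : ∀ i, 1 ≤ i → i ≤ k → f i ≤ P + ν ^ i * Q + E * g i) :
    ∑ j ∈ Finset.range k, ν ^ j * f (k - j) ^ 2 ≤
      3 * P ^ 2 * (1 / (1 - ν)) + 3 * Q ^ 2 * (ν ^ k * (ν / (1 - ν))) +
        3 * E ^ 2 * ∑ j ∈ Finset.range k, ν ^ j * g (k - j) ^ 2 := by
  have h1ν : 0 < 1 - ν := by linarith
  have step1 : ∀ j ∈ Finset.range k, ν ^ j * f (k - j) ^ 2 ≤
      ν ^ j * (3 * P ^ 2 + 3 * Q ^ 2 * (ν ^ (k - j)) ^ 2 + 3 * E ^ 2 * g (k - j) ^ 2) := by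
    intro j hj
    have hjk : j < k := Finset.mem_range.mp hj
    have hb := hfb (k - j) (by omega) (by omega)
    have hsq : f (k - j) ^ 2 ≤ (P + ν ^ (k - j) * Q + E * g (k - j)) ^ 2 :=
      pow_le_pow_left₀ (hf0 _) hb 2
    have h3 := sq3 P (ν ^ (k - j) * Q) (E * g (k - j))
    have hcore : f (k - j) ^ 2 ≤
        3 * P ^ 2 + 3 * Q ^ 2 * (ν ^ (k - j)) ^ 2 + 3 * E ^ 2 * g (k - j) ^ 2 := by
      nlinarith
    exact mul_le_mul_of_nonneg_left hcore (pow_nonneg hν0.le j)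
  calc ∑ j ∈ Finset.range k, ν ^ j * f (k - j) ^ 2
      ≤ ∑ j ∈ Finset.range k,
          ν ^ j * (3 * P ^ 2 + 3 * Q ^ 2 * (ν ^ (k - j)) ^ 2 + 3 * E ^ 2 * g (k - j) ^ 2) :=
        Finset.sum_le_sum step1
    _ = 3 * P ^ 2 * (∑ j ∈ Finset.range k, ν ^ j) +
        3 * Q ^ 2 * (∑ j ∈ Finset.range k, ν ^ j * (ν ^ (k - j)) ^ 2) +
        3 * E ^ 2 * ∑ j ∈ Finset.range k, ν ^ j * g (k - j) ^ 2 := by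
        rw [Finset.mul_sum, Finset.mul_sum, Finset.mul_sum, ← Finset.sum_add_distrib,
          ← Finset.sum_add_distrib]
        exact Finset.sum_congr rfl fun j _ => by ring
    _ ≤ 3 * P ^ 2 * (1 / (1 - ν)) + 3 * Q ^ 2 * (ν ^ k * (ν / (1 - ν))) +
        3 * E ^ 2 * ∑ j ∈ Finset.range k, ν ^ j * g (k - j) ^ 2 := by
        have := geomA hν0.le hν1 k
        have := geomB hν0.le hν1 k
        have hP : (0:ℝ) ≤ 3 * P ^ 2 := by positivity
        have hQ : (0:ℝ) ≤ 3 * Q ^ 2 := by positivity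
        nlinarith [mul_le_mul_of_nonneg_left (geomA hν0.le hν1 k) hP,
          mul_le_mul_of_nonneg_left (geomB hν0.le hν1 k) hQ]

lemma Aseq_nonneg {ν : ℝ} (hν : 0 ≤ ν) {rr : ℕ → ℕ → ℝ} (hrr : ∀ k l, 0 ≤ rr k l) :
    ∀ s k l, 0 ≤ Aseq ν rr s k l := by
  intro s k l
  match s with
  | 0 => exact le_refl 0
  | 1 => exact Finset.sum_nonneg fun j _ => mul_nonneg (pow_nonneg hν j) (sq_nonneg _)
  | s + 2 => exact Finset.sum_nonneg fun j _ => mul_nonneg (pow_nonneg hν j) (sq_nonneg _)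

/-- The induction claim used to solve the quadratic recursion for the localizing radii:
if `r_k^{(l)} ≤ C[(z + εz²) + ν^k R + ε A_{1,k}^{(l)}]` for all `k, l ≥ 1`, then
for all `s ≥ 1`, `k ≥ 1`, `l ≥ 2`:
`A_{s,k}^{(l)} ≤ 7^{2^s−1} C^{2^s} [(1/(1−ν))^{2^s−1}(z+εz²)^{2^s}
  + ν^k (ν/(1−ν))^{2^s−1} R^{2^s}] + 7^{2^s−1} (Cε)^{2^s} A_{s+1,k}^{(l−1)}`. -/
theorem stmt4 (ν ε z R C : ℝ) (hν0 : 0 < ν) (hν1 : ν < 1) (hε : 0 ≤ ε) (hz : 0 ≤ z)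
    (hR : 0 ≤ R)
    (hC : C = 2 * Real.sqrt 2 * (1 + Real.sqrt ν) / (1 - Real.sqrt ν))
    (rr : ℕ → ℕ → ℝ) (hrr : ∀ k l, 0 ≤ rr k l)
    (hrec : ∀ k, 1 ≤ k → ∀ l, 1 ≤ l →
      rr k l ≤ C * ((z + ε * z ^ 2) + ν ^ k * R + ε * Aseq ν rr 1 k l)) :
    ∀ s, 1 ≤ s → ∀ k, 1 ≤ k → ∀ l, 2 ≤ l →
      Aseq ν rr s k l ≤
        7 ^ (2 ^ s - 1) * C ^ (2 ^ s) *
          ((1 / (1 - ν)) ^ (2 ^ s - 1) * (z + ε * z ^ 2) ^ (2 ^ s) +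
            ν ^ k * (ν / (1 - ν)) ^ (2 ^ s - 1) * R ^ (2 ^ s)) +
        7 ^ (2 ^ s - 1) * (C * ε) ^ (2 ^ s) * Aseq ν rr (s + 1) k (l - 1) := by


  have h1ν : 0 < 1 - ν := by linarith
  have h1inv : (0:ℝ) ≤ 1 / (1 - ν) := (one_div_pos.mpr h1ν).le
  have hνν : (0:ℝ) ≤ ν / (1 - ν) := div_nonneg hν0.le h1ν.le
  have hC0 : 0 < C := by
    rw [hC]
    have hsν : Real.sqrt ν < 1 := by
      have := Real.sqrt_lt_sqrt hν0.le hν1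
      simpa using this
    have hsν0 : (0:ℝ) ≤ Real.sqrt ν := Real.sqrt_nonneg ν
    have h2 : (0:ℝ) < Real.sqrt 2 := Real.sqrt_pos.mpr (by norm_num)
    apply div_pos (by nlinarith) (by linarith)
  set a := z + ε * z ^ 2 with ha_def
  have ha : 0 ≤ a := by positivity
  intro s hs
  induction s, hs using Nat.le_induction with
  | base =>
    intro k hk l hl
    have hfb : ∀ i, 1 ≤ i → i ≤ k →
        rr i (l - 1) ≤ C * a + ν ^ i * (C * R) + (C * ε) * Aseq ν rr 1 i (l - 1) := by
      intro i hi _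
      calc rr i (l - 1) ≤ C * (a + ν ^ i * R + ε * Aseq ν rr 1 i (l - 1)) :=
            hrec i hi (l - 1) (by omega)
        _ = C * a + ν ^ i * (C * R) + (C * ε) * Aseq ν rr 1 i (l - 1) := by ring
    have hkey := key ν (C * a) (C * R) (C * ε) hν0 hν1
      (fun i => rr i (l - 1)) (fun i => Aseq ν rr 1 i (l - 1))
      (fun i => hrr i (l - 1)) k hk hfb
    have hA1 : Aseq ν rr 1 k l = ∑ j ∈ Finset.range k, ν ^ j * (rr (k - j) (l - 1)) ^ 2 := rfl
    have hA2 : Aseq ν rr (1 + 1) k (l - 1) =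
        ∑ j ∈ Finset.range k, ν ^ j * (Aseq ν rr 1 (k - j) (l - 1)) ^ 2 := rfl
    rw [← hA2] at hkey
    rw [hA1]
    norm_num only at hkey ⊢
    have h1 : 0 ≤ (C * a) ^ 2 * (1 / (1 - ν)) := mul_nonneg (sq_nonneg _) h1inv
    have h2 : 0 ≤ (C * R) ^ 2 * (ν ^ k * (ν / (1 - ν))) :=
      mul_nonneg (sq_nonneg _) (mul_nonneg (pow_nonneg hν0.le _) hνν)
    have h3 : 0 ≤ (C * ε) ^ 2 * Aseq ν rr 2 k (l - 1) :=
      mul_nonneg (sq_nonneg _) (Aseq_nonneg hν0.le hrr 2 k (l - 1))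
    nlinarith [hkey, h1, h2, h3]
  | succ s hs ih =>
    obtain ⟨t, rfl⟩ : ∃ t, s = t + 1 := ⟨s - 1, by omega⟩
    intro k hk l hl
    set m := 2 ^ (t + 1) - 1 with hm
    have h2pos : 0 < 2 ^ (t + 1) := by positivity
    have h2s : 2 ^ (t + 1) = m + 1 := by omega
    have hA : 2 ^ (t + 1 + 1) = 2 * m + 2 := by rw [pow_succ]; omega
    have hB : 2 ^ (t + 1 + 1) - 1 = 2 * m + 1 := by omega
    set P := 7 ^ m * C ^ (m + 1) * (1 / (1 - ν)) ^ m * a ^ (m + 1) with hP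
    set Q := 7 ^ m * C ^ (m + 1) * (ν / (1 - ν)) ^ m * R ^ (m + 1) with hQ
    set E := 7 ^ m * (C * ε) ^ (m + 1) with hE
    have hfb : ∀ i, 1 ≤ i → i ≤ k →
        Aseq ν rr (t + 1) i l ≤ P + ν ^ i * Q + E * Aseq ν rr (t + 1 + 1) i (l - 1) := by
      intro i hi _
      have h := ih i hi l hl
      rw [h2s] at h
      calc Aseq ν rr (t + 1) i l ≤
          7 ^ m * C ^ (m + 1) *
            ((1 / (1 - ν)) ^ m * a ^ (m + 1) + ν ^ i * (ν / (1 - ν)) ^ m * R ^ (m + 1)) +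
          7 ^ m * (C * ε) ^ (m + 1) * Aseq ν rr (t + 1 + 1) i (l - 1) := h
        _ = P + ν ^ i * Q + E * Aseq ν rr (t + 1 + 1) i (l - 1) := by
          rw [hP, hQ, hE]; ring
    have hkey := key ν P Q E hν0 hν1
      (fun i => Aseq ν rr (t + 1) i l) (fun i => Aseq ν rr (t + 1 + 1) i (l - 1))
      (fun i => Aseq_nonneg hν0.le hrr (t + 1) i l) k hk hfb
    have e2 : Aseq ν rr (t + 1 + 1) k l =
        ∑ j ∈ Finset.range k, ν ^ j * (Aseq ν rr (t + 1) (k - j) l) ^ 2 := rfl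
    have e3 : Aseq ν rr (t + 1 + 1 + 1) k (l - 1) =
        ∑ j ∈ Finset.range k, ν ^ j * (Aseq ν rr (t + 1 + 1) (k - j) (l - 1)) ^ 2 := rfl
    rw [e2, e3, hB, hA]
    refine hkey.trans ?_
    set S := ∑ j ∈ Finset.range k, ν ^ j * (Aseq ν rr (t + 1 + 1) (k - j) (l - 1)) ^ 2 with hS
    have hSn : 0 ≤ S :=
      Finset.sum_nonneg fun j _ => mul_nonneg (pow_nonneg hν0.le j) (sq_nonneg _)
    have x1 : (0:ℝ) ≤ C ^ (2 * m + 2) * ((1 / (1 - ν)) ^ (2 * m + 1) * a ^ (2 * m + 2)) :=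
      mul_nonneg (pow_nonneg hC0.le _) (mul_nonneg (pow_nonneg h1inv _) (pow_nonneg ha _))
    have x2 : (0:ℝ) ≤ ν ^ k * (C ^ (2 * m + 2) * ((ν / (1 - ν)) ^ (2 * m + 1) * R ^ (2 * m + 2))) :=
      mul_nonneg (pow_nonneg hν0.le _)
        (mul_nonneg (pow_nonneg hC0.le _) (mul_nonneg (pow_nonneg hνν _) (pow_nonneg hR _)))
    have x3 : (0:ℝ) ≤ (C * ε) ^ (2 * m + 2) * S :=
      mul_nonneg (pow_nonneg (mul_nonneg hC0.le hε) _) hSn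
    have t1 : 3 * P ^ 2 * (1 / (1 - ν)) ≤
        7 ^ (2 * m + 1) * (C ^ (2 * m + 2) * ((1 / (1 - ν)) ^ (2 * m + 1) * a ^ (2 * m + 2))) := by
      calc 3 * P ^ 2 * (1 / (1 - ν)) =
          3 * 7 ^ (2 * m) * (C ^ (2 * m + 2) * ((1 / (1 - ν)) ^ (2 * m + 1) * a ^ (2 * m + 2))) := by
            rw [hP]; ring
        _ ≤ _ := three_le_seven m _ x1
    have t2 : 3 * Q ^ 2 * (ν ^ k * (ν / (1 - ν))) ≤
        7 ^ (2 * m + 1) *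
          (ν ^ k * (C ^ (2 * m + 2) * ((ν / (1 - ν)) ^ (2 * m + 1) * R ^ (2 * m + 2)))) := by
      calc 3 * Q ^ 2 * (ν ^ k * (ν / (1 - ν))) =
          3 * 7 ^ (2 * m) *
            (ν ^ k * (C ^ (2 * m + 2) * ((ν / (1 - ν)) ^ (2 * m + 1) * R ^ (2 * m + 2)))) := by
            rw [hQ]; ring
        _ ≤ _ := three_le_seven m _ x2
    have t3 : 3 * E ^ 2 * S ≤ 7 ^ (2 * m + 1) * ((C * ε) ^ (2 * m + 2) * S) := by
      calc 3 * E ^ 2 * S = 3 * 7 ^ (2 * m) * ((C * ε) ^ (2 * m + 2) * S) := by rw [hE]; ring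
        _ ≤ _ := three_le_seven m _ x3
    calc 3 * P ^ 2 * (1 / (1 - ν)) + 3 * Q ^ 2 * (ν ^ k * (ν / (1 - ν))) + 3 * E ^ 2 * S
        ≤ 7 ^ (2 * m + 1) * (C ^ (2 * m + 2) * ((1 / (1 - ν)) ^ (2 * m + 1) * a ^ (2 * m + 2))) +
          7 ^ (2 * m + 1) *
            (ν ^ k * (C ^ (2 * m + 2) * ((ν / (1 - ν)) ^ (2 * m + 1) * R ^ (2 * m + 2)))) +
          7 ^ (2 * m + 1) * ((C * ε) ^ (2 * m + 2) * S) := by linarith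
      _ = 7 ^ (2 * m + 1) * C ^ (2 * m + 2) *
            ((1 / (1 - ν)) ^ (2 * m + 1) * a ^ (2 * m + 2) +
              ν ^ k * (ν / (1 - ν)) ^ (2 * m + 1) * R ^ (2 * m + 2)) +
          7 ^ (2 * m + 1) * (C * ε) ^ (2 * m + 2) * S := by ring
end

section
/- Let 0 ≤ ν < 1, κ ≥ 0 and R̃ ≥ 0. Let (r_k^{(l)})_{k≥1, l≥0} be nonnegative reals with r_k^{(0)} ≤ R̃ for all k ≥ 1, satisfying for all k ≥ 1 and l ≥ 1: r_k^{(l)} ≤ κ Σ_{r=0}^{k−1} ν^r r_{k−r}^{(l−1)} + 2√2 ν^k R̃. Then for every l ≥ 1 and every k ≥ 1: r_k^{(l)} ≤ [ (κ/(1−ν))^l + 2√2 ν^k Σ_{s=0}^{l−1} (κ k)^s ] R̃. -/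
/-!
Set `c = 2√2`, `A = κ / (1 - ν)` and `S_l(k) = Σ_{s<l} (κ k)^s`. For `l = 0` the claimed bound reads
`(1 + 0) R̃ = R̃`, so it holds by assumption, and one inducts on `l` from there. Feeding the bound
`A^l R̃ + c ν^{k-j} S_l(k-j) R̃ ≤ A^l R̃ + c ν^{k-j} S_l(k) R̃` into the recursion, the weight `ν^j`
turns `ν^{k-j}` into `ν^k`, the first terms sum to at most `A^l R̃ / (1 - ν)`, and the `k` copies of
the second term together with the inhomogeneity give `c ν^k (κ k S_l(k) + 1) R̃ = c ν^k S_{l+1}(k) R̃`.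
-/

open Finset

theorem sum_pow_mul_le_of_le_add {ν a b : ℝ} {k : ℕ} {f : ℕ → ℝ} (hν0 : 0 ≤ ν) (hν1 : ν < 1)
    (ha : 0 ≤ a) (hf : ∀ j < k, f j ≤ a + b * ν ^ (k - j)) :
    ∑ j ∈ range k, ν ^ j * f j ≤ a / (1 - ν) + k * b * ν ^ k := by
  have hgeom : ∑ j ∈ range k, ν ^ j ≤ 1 / (1 - ν) := by
    simpa using geom_sum_Ico_le_of_lt_one (m := 0) (n := k) hν0 hν1
  calc ∑ j ∈ range k, ν ^ j * f j
      ≤ ∑ j ∈ range k, (a * ν ^ j + b * ν ^ k) := by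
        refine sum_le_sum fun j hj => ?_
        have hjk : j ≤ k := (mem_range.1 hj).le
        calc ν ^ j * f j ≤ ν ^ j * (a + b * ν ^ (k - j)) :=
              mul_le_mul_of_nonneg_left (hf j (mem_range.1 hj)) (pow_nonneg hν0 j)
          _ = a * ν ^ j + b * (ν ^ j * ν ^ (k - j)) := by ring
          _ = a * ν ^ j + b * ν ^ k := by rw [pow_mul_pow_sub ν hjk]
    _ = a * ∑ j ∈ range k, ν ^ j + k * b * ν ^ k := by
        rw [sum_add_distrib, ← mul_sum, sum_const, card_range, nsmul_eq_mul]; ring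
    _ ≤ a * (1 / (1 - ν)) + k * b * ν ^ k := by gcongr
    _ = a / (1 - ν) + k * b * ν ^ k := by ring

noncomputable def radiusBound (ν κ c R : ℝ) (l k : ℕ) : ℝ :=
  ((κ / (1 - ν)) ^ l + c * ν ^ k * ∑ s ∈ range l, (κ * k) ^ s) * R

section radiusBound

variable {ν κ c R : ℝ}

@[simp]
theorem radiusBound_zero (k : ℕ) : radiusBound ν κ c R 0 k = R := by
  simp [radiusBound]

theorem radiusBound_le_of_le {l m k : ℕ} (hν0 : 0 ≤ ν) (hκ : 0 ≤ κ) (hc : 0 ≤ c) (hR : 0 ≤ R)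
    (hmk : m ≤ k) :
    radiusBound ν κ c R l m ≤
      (κ / (1 - ν)) ^ l * R + c * (∑ s ∈ range l, (κ * k) ^ s) * R * ν ^ m := by
  have hS : ∑ s ∈ range l, (κ * m) ^ s ≤ ∑ s ∈ range l, (κ * k) ^ s := by gcongr
  calc radiusBound ν κ c R l m
      = (κ / (1 - ν)) ^ l * R + c * (∑ s ∈ range l, (κ * m) ^ s) * R * ν ^ m := by
        rw [radiusBound]; ring
    _ ≤ _ := by gcongr

theorem radiusBound_succ (l k : ℕ) :
    κ * ((κ / (1 - ν)) ^ l * R / (1 - ν) + k * (c * (∑ s ∈ range l, (κ * k) ^ s) * R) * ν ^ k)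
        + c * ν ^ k * R = radiusBound ν κ c R (l + 1) k := by
  rw [radiusBound, geom_sum_succ]
  ring

theorem le_radiusBound_of_recursion (hν0 : 0 ≤ ν) (hν1 : ν < 1) (hκ : 0 ≤ κ) (hc : 0 ≤ c)
    (hR : 0 ≤ R) {rr : ℕ → ℕ → ℝ} (h0 : ∀ k, 1 ≤ k → rr k 0 ≤ R)
    (hrec : ∀ k, 1 ≤ k → ∀ l, 1 ≤ l →
      rr k l ≤ κ * (∑ j ∈ range k, ν ^ j * rr (k - j) (l - 1)) + c * ν ^ k * R)
    (l k : ℕ) (hk : 1 ≤ k) : rr k l ≤ radiusBound ν κ c R l k := by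
  induction l generalizing k with
  | zero => simpa using h0 k hk
  | succ l ih =>
    have hsum : ∑ j ∈ range k, ν ^ j * rr (k - j) l ≤
        (κ / (1 - ν)) ^ l * R / (1 - ν) + k * (c * (∑ s ∈ range l, (κ * k) ^ s) * R) * ν ^ k := by
      refine sum_pow_mul_le_of_le_add hν0 hν1 (by positivity) fun j hj => ?_
      exact (ih (k - j) (by omega)).trans
        (radiusBound_le_of_le hν0 hκ hc hR (Nat.sub_le k j))
    calc rr k (l + 1) ≤ κ * (∑ j ∈ range k, ν ^ j * rr (k - j) l) + c * ν ^ k * R :=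
          hrec k hk (l + 1) l.succ_pos
      _ ≤ _ := by gcongr
      _ = radiusBound ν κ c R (l + 1) k := radiusBound_succ l k

end radiusBound

theorem stmt6_general (ν κ R : ℝ) (hν0 : 0 ≤ ν) (hν1 : ν < 1) (hκ : 0 ≤ κ) (hR : 0 ≤ R)
    (rr : ℕ → ℕ → ℝ)
    (h0 : ∀ k, 1 ≤ k → rr k 0 ≤ R)
    (hrec : ∀ k, 1 ≤ k → ∀ l, 1 ≤ l →
      rr k l ≤ κ * (∑ j ∈ Finset.range k, ν ^ j * rr (k - j) (l - 1)) +
        2 * Real.sqrt 2 * ν ^ k * R) :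
    ∀ l, 1 ≤ l → ∀ k, 1 ≤ k →
      rr k l ≤ ((κ / (1 - ν)) ^ l +
        2 * Real.sqrt 2 * ν ^ k * ∑ s ∈ Finset.range l, (κ * k) ^ s) * R :=
  fun l _ k hk =>
    le_radiusBound_of_recursion hν0 hν1 hκ (by positivity) hR h0 hrec l k hk

/-- The linear recursion for the radii in the convergence-to-the-global-maximizer proof:
if `r_k^{(0)} ≤ R̃` and `r_k^{(l)} ≤ κ Σ_{j<k} ν^j r_{k−j}^{(l−1)} + 2√2 ν^k R̃`, then
`r_k^{(l)} ≤ [(κ/(1−ν))^l + 2√2 ν^k Σ_{s<l} (κk)^s] R̃` for all `l ≥ 1`, `k ≥ 1`. -/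
theorem stmt6 (ν κ R : ℝ) (hν0 : 0 ≤ ν) (hν1 : ν < 1) (hκ : 0 ≤ κ) (hR : 0 ≤ R)
    (rr : ℕ → ℕ → ℝ) (hrr : ∀ k l, 0 ≤ rr k l)
    (h0 : ∀ k, 1 ≤ k → rr k 0 ≤ R)
    (hrec : ∀ k, 1 ≤ k → ∀ l, 1 ≤ l →
      rr k l ≤ κ * (∑ j ∈ Finset.range k, ν ^ j * rr (k - j) (l - 1)) +
        2 * Real.sqrt 2 * ν ^ k * R) :
    ∀ l, 1 ≤ l → ∀ k, 1 ≤ k →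
      rr k l ≤ ((κ / (1 - ν)) ^ l +
        2 * Real.sqrt 2 * ν ^ k * ∑ s ∈ Finset.range l, (κ * k) ^ s) * R :=
  stmt6_general ν κ R hν0 hν1 hκ hR rr h0 hrec
end

section
/- Let 0 ≤ ν < 1, κ ≥ 0 and R̃ ≥ 0 with κ < 1 − ν. Let (r_k^{(l)})_{k≥1, l≥0} be nonnegative reals with r_k^{(0)} ≤ R̃ for all k ≥ 1, satisfying for all k ≥ 1 and l ≥ 1: r_k^{(l)} ≤ κ Σ_{r=0}^{k−1} ν^r r_{k−r}^{(l−1)} + 2√2 ν^k R̃. Then for every k ≥ 1 with κ k < 1: inf_{l≥1} r_k^{(l)} ≤ 2√2 ν^k R̃ / (1 − κ k). -/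
/-!
Put `μ = κ / (1 - ν) < 1` and `D = c / (1 - κ k)` with `c = 2√2 R̃`. By induction on `l`,
`r_m^{(l)} ≤ ν^m D + μ^l R̃` for all `1 ≤ m ≤ k`: in the recursion the convolution sum contributes
at most `κ m ν^m D ≤ κ k ν^m D` from the first term (as `ν^j ν^{m-j} = ν^m`) and at most
`κ (∑ ν^j) μ^l R̃ ≤ μ^{l+1} R̃` from the second, and `D` is the fixed point of `D ↦ κ k D + c`.
Letting `l → ∞` kills the term `μ^l R̃`.
-/

open Finset Filter Topology

lemma sum_pow_mul_le_of_forall_le {ν A B : ℝ} (hν : 0 ≤ ν) {n : ℕ} {r : ℕ → ℝ}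
    (hr : ∀ m, 1 ≤ m → m ≤ n → r m ≤ ν ^ m * A + B) :
    ∑ j ∈ range n, ν ^ j * r (n - j) ≤ n * (ν ^ n * A) + (∑ j ∈ range n, ν ^ j) * B := by
  calc ∑ j ∈ range n, ν ^ j * r (n - j)
      ≤ ∑ j ∈ range n, (ν ^ n * A + ν ^ j * B) := by
        refine sum_le_sum fun j hj => ?_
        have hjn := mem_range.mp hj
        calc ν ^ j * r (n - j) ≤ ν ^ j * (ν ^ (n - j) * A + B) :=
              mul_le_mul_of_nonneg_left (hr (n - j) (by omega) (by omega)) (pow_nonneg hν j)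
          _ = ν ^ (j + (n - j)) * A + ν ^ j * B := by ring
          _ = ν ^ n * A + ν ^ j * B := by rw [Nat.add_sub_cancel' hjn.le]
    _ = n * (ν ^ n * A) + (∑ j ∈ range n, ν ^ j) * B := by
        rw [sum_add_distrib, sum_const, card_range, nsmul_eq_mul, sum_mul]

lemma geom_sum_range_le_inv_one_sub {x : ℝ} (hx0 : 0 ≤ x) (hx1 : x < 1) (n : ℕ) :
    ∑ i ∈ range n, x ^ i ≤ (1 - x)⁻¹ := by
  simpa using geom_sum_Ico_le_of_lt_one (m := 0) (n := n) hx0 hx1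

lemma le_of_forall_le_add_pow_mul {x T μ R : ℝ} (hμ0 : 0 ≤ μ) (hμ1 : μ < 1)
    (h : ∀ l : ℕ, x ≤ T + μ ^ l * R) : x ≤ T := by
  have hlim : Tendsto (fun l : ℕ => T + μ ^ l * R) atTop (𝓝 T) := by
    simpa using tendsto_const_nhds.add
      ((tendsto_pow_atTop_nhds_zero_of_lt_one hμ0 hμ1).mul_const R)
  exact ge_of_tendsto' hlim h

theorem le_pow_mul_div_add_pow_mul_of_recursion {ν κ c R : ℝ} (hν0 : 0 ≤ ν) (hν1 : ν < 1)
    (hκ0 : 0 ≤ κ) (hc : 0 ≤ c) (hR : 0 ≤ R) {r : ℕ → ℕ → ℝ}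
    (h0 : ∀ m, 1 ≤ m → r m 0 ≤ R)
    (hrec : ∀ m, 1 ≤ m → ∀ l,
      r m (l + 1) ≤ κ * (∑ j ∈ range m, ν ^ j * r (m - j) l) + c * ν ^ m)
    {k : ℕ} (hk : κ * k < 1) (l : ℕ) {m : ℕ} (hm1 : 1 ≤ m) (hmk : m ≤ k) :
    r m l ≤ ν ^ m * (c / (1 - κ * k)) + (κ / (1 - ν)) ^ l * R := by
  induction l generalizing m with
  | zero =>
    simpa using (h0 m hm1).trans (le_add_of_nonneg_left (by positivity))
  | succ l ih =>
    have hconv := sum_pow_mul_le_of_forall_le hν0 (r := fun i => r i l)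
      fun i hi1 him => ih hi1 (him.trans hmk)
    have hκk : 1 - κ * k ≠ 0 := by linarith
    calc r m (l + 1)
        ≤ κ * (m * (ν ^ m * (c / (1 - κ * k)))
            + (∑ j ∈ range m, ν ^ j) * ((κ / (1 - ν)) ^ l * R)) + c * ν ^ m := by
          grw [hrec m hm1 l, hconv]
      _ ≤ κ * (k * (ν ^ m * (c / (1 - κ * k)))
            + (1 - ν)⁻¹ * ((κ / (1 - ν)) ^ l * R)) + c * ν ^ m := by
          gcongr
          exact geom_sum_range_le_inv_one_sub hν0 hν1 m
      _ = ν ^ m * (c / (1 - κ * k)) + (κ / (1 - ν)) ^ (l + 1) * R := by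
          have hfix : κ * k * (c / (1 - κ * k)) + c = c / (1 - κ * k) := by
            field_simp
            ring
          linear_combination ν ^ m * hfix

/-- Optimized (over the iteration depth `l ≥ 1`) form of the linear recursion bound:
under `κ < 1 − ν`, for every `k ≥ 1` with `κk < 1` one has
`inf_{l ≥ 1} r_k^{(l)} ≤ 2√2 ν^k R̃ / (1 − κk)`. -/
theorem stmt7 (ν κ R : ℝ) (hν0 : 0 ≤ ν) (hν1 : ν < 1) (hκ0 : 0 ≤ κ) (hκ : κ < 1 - ν)
    (hR : 0 ≤ R)
    (rr : ℕ → ℕ → ℝ) (hrr : ∀ k l, 0 ≤ rr k l)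
    (h0 : ∀ k, 1 ≤ k → rr k 0 ≤ R)
    (hrec : ∀ k, 1 ≤ k → ∀ l, 1 ≤ l →
      rr k l ≤ κ * (∑ j ∈ Finset.range k, ν ^ j * rr (k - j) (l - 1)) +
        2 * Real.sqrt 2 * ν ^ k * R) :
    ∀ k : ℕ, 1 ≤ k → κ * (k : ℝ) < 1 →
      (⨅ l : ℕ, rr k (l + 1)) ≤ 2 * Real.sqrt 2 * ν ^ k * R / (1 - κ * (k : ℝ)) := by
  intro k hk hκk
  have hrec' : ∀ m, 1 ≤ m → ∀ l, rr m (l + 1) ≤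
      κ * (∑ j ∈ range m, ν ^ j * rr (m - j) l) + 2 * Real.sqrt 2 * R * ν ^ m := by
    intro m hm l
    have h := hrec m hm (l + 1) (Nat.le_add_left 1 l)
    rw [Nat.add_sub_cancel] at h
    linarith
  have hbound := le_pow_mul_div_add_pow_mul_of_recursion hν0 hν1 hκ0 (by positivity) hR h0
    hrec' hκk
  have hbdd : BddBelow (Set.range fun l => rr k (l + 1)) :=
    ⟨0, Set.forall_mem_range.2 fun l => hrr k (l + 1)⟩
  have hμ1 : κ / (1 - ν) < 1 := (div_lt_one (by linarith)).mpr hκ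
  calc (⨅ l : ℕ, rr k (l + 1)) ≤ ν ^ k * (2 * Real.sqrt 2 * R / (1 - κ * k)) :=
        le_of_forall_le_add_pow_mul (div_nonneg hκ0 (by linarith)) hμ1 (R := κ / (1 - ν) * R)
          fun l => (ciInf_le hbdd l).trans <| (hbound (l + 1) hk le_rfl).trans_eq (by ring)
    _ = 2 * Real.sqrt 2 * ν ^ k * R / (1 - κ * k) := by ring
end
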